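/- Let α > d''/2 and d', d'' ≥ 1. There are constants c₁, c₂ > 0 (depending on α, d'') such that for every n' ∈ ℤ^{d'}, c₁(|n'|² + 1)^{-(α − d''/2)} ≤ Σ_{n'' ∈ ℤ^{d''}} (|n'|² + |n''|² + 1)^{-α} ≤ c₂(|n'|² + 1)^{-(α − d''/2)}. -/
import Mathlib

open MeasureTheory Set Real


lemma myCont (t β : ℝ) (ht : 0 < t) : Continuous fun u : ℝ => (t + u ^ 2) ^ (-β) :=
  Continuous.rpow_const (by continuity) (fun x => Or.inl (by positivity))

lemma myIntegrableOn {β : ℝ} (hβ : 1 / 2 < β) :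
    IntegrableOn (fun u : ℝ => (1 + u ^ 2) ^ (-β)) (Ioi 0) := by
  have hc := myCont 1 β one_pos
  have h1 : IntegrableOn (fun u : ℝ => (1 + u ^ 2) ^ (-β)) (Ioc 0 1) :=
    hc.integrableOn_Ioc
  have h2 : IntegrableOn (fun u : ℝ => (1 + u ^ 2) ^ (-β)) (Ioi 1) := by
    apply Integrable.mono' (integrableOn_Ioi_rpow_of_lt (show -(2*β) < -1 by linarith) one_pos)
    · exact hc.aestronglyMeasurable.restrict
    · filter_upwards [ae_restrict_mem measurableSet_Ioi] with u hu
      have hu1 : (1:ℝ) < u := hu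
      rw [Real.norm_eq_abs, abs_of_nonneg (by positivity)]
      calc (1 + u ^ 2) ^ (-β) ≤ (u ^ 2) ^ (-β) :=
            Real.rpow_le_rpow_of_nonpos (by positivity) (by linarith) (by linarith)
        _ = u ^ (-(2*β)) := by
            rw [← Real.rpow_natCast u 2, ← Real.rpow_mul (by linarith)]
            norm_num
  rw [← Ioc_union_Ioi_eq_Ioi (zero_le_one (α := ℝ))]
  exact h1.union h2

lemma myScaled {β t : ℝ} (ht : 1 ≤ t) :
    (∫ x in Ioi (0:ℝ), (t + x ^ 2) ^ (-β)) =
      t ^ (1/2 - β) * ∫ u in Ioi (0:ℝ), (1 + u ^ 2) ^ (-β) := by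
  have ht0 : (0:ℝ) < t := lt_of_lt_of_le one_pos ht
  set s := Real.sqrt t with hs
  have hs0 : 0 < s := Real.sqrt_pos.mpr ht0
  have hs2 : s ^ 2 = t := Real.sq_sqrt ht0.le
  have hpt : ∀ x : ℝ, (t + x ^ 2) ^ (-β) = t ^ (-β) * (1 + (s⁻¹ * x) ^ 2) ^ (-β) := by
    intro x
    rw [← Real.mul_rpow ht0.le (by positivity)]
    congr 1
    field_simp
    rw [← hs2]
    ring
  calc (∫ x in Ioi (0:ℝ), (t + x ^ 2) ^ (-β))
      = ∫ x in Ioi (0:ℝ), t ^ (-β) * (1 + (s⁻¹ * x) ^ 2) ^ (-β) := by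
        exact setIntegral_congr_fun measurableSet_Ioi (fun x _ => hpt x)
    _ = t ^ (-β) * ∫ x in Ioi (0:ℝ), (1 + (s⁻¹ * x) ^ 2) ^ (-β) := by
        rw [integral_const_mul]
    _ = t ^ (-β) * ((s⁻¹)⁻¹ • ∫ u in Ioi (s⁻¹ * 0), (1 + u ^ 2) ^ (-β)) := by
        rw [integral_comp_mul_left_Ioi (fun u => (1 + u ^ 2) ^ (-β)) 0 (inv_pos.mpr hs0)]
    _ = t ^ (1/2 - β) * ∫ u in Ioi (0:ℝ), (1 + u ^ 2) ^ (-β) := by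
        rw [mul_zero, inv_inv, smul_eq_mul, ← mul_assoc]
        congr 1
        rw [hs, Real.sqrt_eq_rpow, ← Real.rpow_add ht0]
        ring_nf

lemma myIntegrableOn' {β t : ℝ} (hβ : 1 / 2 < β) (ht : 1 ≤ t) :
    IntegrableOn (fun x : ℝ => (t + x ^ 2) ^ (-β)) (Ioi 0) := by
  have ht0 : (0:ℝ) < t := lt_of_lt_of_le one_pos ht
  set s := Real.sqrt t with hs
  have hs0 : 0 < s := Real.sqrt_pos.mpr ht0
  have hs2 : s ^ 2 = t := Real.sq_sqrt ht0.le
  have h1 : IntegrableOn (fun x : ℝ => (1 + (s⁻¹ * x) ^ 2) ^ (-β)) (Ioi 0) := by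
    have := (integrableOn_Ioi_comp_mul_left_iff (fun u : ℝ => (1 + u ^ 2) ^ (-β)) 0
      (inv_pos.mpr hs0)).mpr
    rw [mul_zero] at this
    exact this (myIntegrableOn hβ)
  have h2 := h1.const_mul (t ^ (-β))
  apply (IntegrableOn.congr_fun h2 · measurableSet_Ioi)
  intro x _
  show t ^ (-β) * (1 + (s⁻¹ * x) ^ 2) ^ (-β) = (t + x ^ 2) ^ (-β)
  rw [← Real.mul_rpow ht0.le (by positivity)]
  congr 1
  field_simp
  rw [← hs2]

lemma partial_sum_le {β t : ℝ} (hβ : 1 / 2 < β) (ht : 1 ≤ t) (n : ℕ) :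
    ∑ i ∈ Finset.range n, (t + ((i:ℝ) + 1) ^ 2) ^ (-β) ≤
      ∫ x in Ioi (0:ℝ), (t + x ^ 2) ^ (-β) := by
  have ht0 : (0:ℝ) < t := lt_of_lt_of_le one_pos ht
  have hanti : AntitoneOn (fun x : ℝ => (t + x ^ 2) ^ (-β)) (Icc (0:ℝ) (0 + n)) := by
    intro x hx y hy hxy
    exact Real.rpow_le_rpow_of_nonpos (by nlinarith [hx.1]) (by nlinarith [hx.1]) (by linarith)
  have h := hanti.sum_le_integral
  have hle : (∫ x in (0:ℝ)..(0 + n : ℝ), (t + x ^ 2) ^ (-β)) ≤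
      ∫ x in Ioi (0:ℝ), (t + x ^ 2) ^ (-β) := by
    rw [intervalIntegral.integral_of_le (by positivity)]
    apply setIntegral_mono_set (myIntegrableOn' hβ ht)
    · filter_upwards with x using by positivity
    · filter_upwards with x using fun hx => hx.1
  refine le_trans (le_of_eq ?_) (le_trans h hle)
  apply Finset.sum_congr rfl
  intro i _
  push_cast
  ring_nf

lemma oneD {β : ℝ} (hβ : 1 / 2 < β) :
    ∃ c₁ c₂ : ℝ, 0 < c₁ ∧ 0 < c₂ ∧ ∀ t : ℝ, 1 ≤ t →
      Summable (fun m : ℤ => (t + (m:ℝ) ^ 2) ^ (-β)) ∧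
      c₁ * t ^ (1/2 - β) ≤ (∑' m : ℤ, (t + (m:ℝ) ^ 2) ^ (-β)) ∧
      (∑' m : ℤ, (t + (m:ℝ) ^ 2) ^ (-β)) ≤ c₂ * t ^ (1/2 - β) := by
  set I := ∫ u in Ioi (0:ℝ), (1 + u ^ 2) ^ (-β) with hI
  have hI0 : 0 ≤ I := setIntegral_nonneg measurableSet_Ioi (fun x _ => by positivity)
  refine ⟨(2:ℝ) ^ (-β), 1 + 2 * I, by positivity, by positivity, ?_⟩
  intro t ht
  have ht0 : (0:ℝ) < t := lt_of_lt_of_le one_pos ht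
  set f : ℤ → ℝ := fun m => (t + (m:ℝ) ^ 2) ^ (-β) with hf
  have hfnn : ∀ m : ℤ, 0 ≤ f m := fun m => by positivity
  -- tail sums
  have hbound : ∀ n : ℕ, ∑ i ∈ Finset.range n, f (i + 1) ≤ t ^ (1/2 - β) * I := by
    intro n
    have := partial_sum_le hβ ht n
    rw [myScaled ht] at this
    refine le_trans (le_of_eq ?_) this
    apply Finset.sum_congr rfl
    intro i _; simp only [hf]; push_cast; ring_nf
  have htail_nn : ∀ n : ℕ, 0 ≤ f (n + 1) := fun n => hfnn _
  have htailsum : Summable fun n : ℕ => f (n + 1) := summable_of_sum_range_le htail_nn hbound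
  have htail_le : (∑' n : ℕ, f (n + 1)) ≤ t ^ (1/2 - β) * I :=
    Real.tsum_le_of_sum_range_le htail_nn hbound
  have hnat : Summable fun n : ℕ => f n := by
    apply (summable_nat_add_iff 1).mp
    exact htailsum.congr fun n => congrArg f (by push_cast; ring)
  have hneg_eq : ∀ n : ℕ, f (-((n:ℤ) + 1)) = f ((n:ℤ) + 1) := by
    intro n; simp only [hf]; push_cast; ring_nf
  have hnegtail : Summable fun n : ℕ => f (-((n:ℤ) + 1)) := by
    apply htailsum.congr; intro n; rw [← hneg_eq n]
  have hsum : Summable f := Summable.of_nat_of_neg_add_one hnat hnegtail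
  have hsplit : (∑' m : ℤ, f m) = (∑' n : ℕ, f n) + ∑' n : ℕ, f (-((n:ℤ) + 1)) :=
    tsum_of_nat_of_neg_add_one hnat hnegtail
  have hnat_split : (∑' n : ℕ, f n) = f 0 + ∑' n : ℕ, f ((n:ℤ) + 1) := by
    rw [Summable.tsum_eq_zero_add hnat]
    push_cast
    rfl
  have hnegtail_eq : (∑' n : ℕ, f (-((n:ℤ) + 1))) = ∑' n : ℕ, f ((n:ℤ) + 1) :=
    tsum_congr hneg_eq
  refine ⟨hsum, ?_, ?_⟩
  · -- lower bound
    set K := ⌊Real.sqrt t⌋₊ with hK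
    have hterm : ∀ n : ℕ, n ≤ K → (2 * t) ^ (-β) ≤ f n := by
      intro n hn
      have h1 : (n:ℝ) ≤ Real.sqrt t := le_trans (Nat.cast_le.mpr hn) (Nat.floor_le (Real.sqrt_nonneg t))
      have h2 : (n:ℝ) ^ 2 ≤ t := by
        have := Real.sq_sqrt ht0.le
        nlinarith [Real.sqrt_nonneg t]
      exact Real.rpow_le_rpow_of_nonpos (by positivity) (by push_cast; nlinarith) (by linarith)
    have hfin : ∑ n ∈ Finset.range (K + 1), f n ≤ ∑' n : ℕ, f n := by
      apply Summable.sum_le_tsum _ (fun n _ => hfnn _) hnat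
    have hcount : (2:ℝ) ^ (-β) * t ^ (1/2 - β) ≤ ∑ n ∈ Finset.range (K + 1), f n := by
      have h1 : ((K:ℝ) + 1) * (2 * t) ^ (-β) ≤ ∑ n ∈ Finset.range (K + 1), f n := by
        calc ((K:ℝ) + 1) * (2 * t) ^ (-β)
            = ∑ _n ∈ Finset.range (K + 1), (2 * t) ^ (-β) := by
              rw [Finset.sum_const, Finset.card_range]; push_cast; ring
          _ ≤ ∑ n ∈ Finset.range (K + 1), f n :=
              Finset.sum_le_sum (fun n hn => hterm n (Nat.lt_succ_iff.mp (Finset.mem_range.mp hn)))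
      refine le_trans ?_ h1
      have hsq : Real.sqrt t ≤ (K:ℝ) + 1 := le_of_lt (Nat.lt_floor_add_one _)
      have h2t : (2 * t) ^ (-β) = 2 ^ (-β) * t ^ (-β) := Real.mul_rpow (by norm_num) ht0.le
      rw [h2t]
      have hsqr : t ^ ((1:ℝ)/2) ≤ (K:ℝ) + 1 := by rwa [← Real.sqrt_eq_rpow]
      have : t ^ (1/2 - β) = t ^ ((1:ℝ)/2) * t ^ (-β) := by
        rw [← Real.rpow_add ht0]; ring_nf
      rw [this]
      have htb : (0:ℝ) ≤ t ^ (-β) := by positivity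
      calc 2 ^ (-β) * (t ^ ((1:ℝ)/2) * t ^ (-β)) ≤ 2 ^ (-β) * (((K:ℝ) + 1) * t ^ (-β)) := by
            apply mul_le_mul_of_nonneg_left (mul_le_mul_of_nonneg_right hsqr htb) (by positivity)
        _ = ((K:ℝ) + 1) * (2 ^ (-β) * t ^ (-β)) := by ring
    have hZle : (∑' n : ℕ, f n) ≤ ∑' m : ℤ, f m := by
      rw [hsplit]
      have : 0 ≤ ∑' n : ℕ, f (-((n:ℤ) + 1)) := tsum_nonneg (fun n => hfnn _)
      linarith
    linarith
  · -- upper bound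
    rw [hsplit, hnat_split, hnegtail_eq]
    have hf0 : f 0 ≤ t ^ (1/2 - β) := by
      have : f 0 = t ^ (-β) := by simp [hf]
      rw [this]
      exact Real.rpow_le_rpow_of_exponent_le ht (by linarith)
    have htail' : (∑' n : ℕ, f ((n:ℤ) + 1)) ≤ t ^ (1/2 - β) * I := by
      refine le_trans (le_of_eq (tsum_congr fun n => ?_)) htail_le
      push_cast; ring_nf
    nlinarith [Real.rpow_nonneg ht0.le (1/2 - β), hI0]

lemma myKey (k : ℕ) : ∀ α : ℝ, (k:ℝ)/2 < α →
    ∃ c₁ c₂ : ℝ, 0 < c₁ ∧ 0 < c₂ ∧ ∀ t : ℝ, 1 ≤ t →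
      Summable (fun n : Fin k → ℤ => (t + ∑ i, ((n i : ℝ)) ^ 2) ^ (-α)) ∧
      c₁ * t ^ (-(α - (k:ℝ)/2)) ≤ (∑' n : Fin k → ℤ, (t + ∑ i, ((n i : ℝ)) ^ 2) ^ (-α)) ∧
      (∑' n : Fin k → ℤ, (t + ∑ i, ((n i : ℝ)) ^ 2) ^ (-α)) ≤ c₂ * t ^ (-(α - (k:ℝ)/2)) := by
  induction k with
  | zero =>
    intro α hα
    refine ⟨1, 1, one_pos, one_pos, fun t ht => ?_⟩
    have ht0 : (0:ℝ) < t := lt_of_lt_of_le one_pos ht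
    have heq : (∑' n : Fin 0 → ℤ, (t + ∑ i, ((n i : ℝ)) ^ 2) ^ (-α)) = t ^ (-α) := by
      rw [tsum_fintype]
      simp
    refine ⟨Summable.of_finite, ?_, ?_⟩ <;>
      simp [heq, Nat.cast_zero]
  | succ k ih =>
    intro α hα
    have hk : (k:ℝ)/2 < α := by push_cast at hα ⊢; linarith
    obtain ⟨a₁, a₂, ha₁, ha₂, hA⟩ := ih α hk
    set β := α - (k:ℝ)/2 with hβdef
    have hβ : 1/2 < β := by push_cast at hα; simp only [hβdef]; linarith
    obtain ⟨b₁, b₂, hb₁, hb₂, hB⟩ := oneD hβ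
    refine ⟨a₁ * b₁, a₂ * b₂, by positivity, by positivity, fun t ht => ?_⟩
    have ht0 : (0:ℝ) < t := lt_of_lt_of_le one_pos ht
    set F : ℤ × (Fin k → ℤ) → ℝ :=
      fun p => ((t + (p.1 : ℝ) ^ 2) + ∑ i, ((p.2 i : ℝ)) ^ 2) ^ (-α) with hF
    have hFnn : ∀ p, 0 ≤ F p := fun p => by positivity
    have htm : ∀ m : ℤ, (1:ℝ) ≤ t + (m:ℝ) ^ 2 :=
      fun m => le_add_of_le_of_nonneg ht (by positivity)
    -- inner sums
    have hinner : ∀ m : ℤ, Summable (fun v : Fin k → ℤ => F (m, v)) := fun m => (hA _ (htm m)).1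
    have hinner_ub : ∀ m : ℤ, (∑' v : Fin k → ℤ, F (m, v)) ≤ a₂ * (t + (m:ℝ) ^ 2) ^ (-β) :=
      fun m => (hA _ (htm m)).2.2
    have hinner_lb : ∀ m : ℤ, a₁ * (t + (m:ℝ) ^ 2) ^ (-β) ≤ (∑' v : Fin k → ℤ, F (m, v)) :=
      fun m => (hA _ (htm m)).2.1
    have hBsum : Summable (fun m : ℤ => (t + (m:ℝ) ^ 2) ^ (-β)) := (hB t ht).1
    have houter : Summable (fun m : ℤ => ∑' v : Fin k → ℤ, F (m, v)) := by
      apply Summable.of_nonneg_of_le (fun m => tsum_nonneg (fun v => hFnn _)) hinner_ub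
        (hBsum.mul_left a₂)
    have hFsum : Summable F := (summable_prod_of_nonneg hFnn).mpr ⟨hinner, houter⟩
    -- relate the (k+1)-dim sum to F
    set e : (Fin (k+1) → ℤ) ≃ ℤ × (Fin k → ℤ) :=
      ⟨fun n => (n 0, fun i => n i.succ), fun p => Fin.cons p.1 p.2,
        fun n => Fin.cons_self_tail n, fun p => by simp⟩ with he
    have hcomp : ∀ n : Fin (k+1) → ℤ, (t + ∑ i, ((n i : ℝ)) ^ 2) ^ (-α) = F (e n) := by
      intro n
      show (t + ∑ i, ((n i : ℝ)) ^ 2) ^ (-α) =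
        ((t + ((n 0 : ℝ)) ^ 2) + ∑ i : Fin k, ((n i.succ : ℝ)) ^ 2) ^ (-α)
      rw [Fin.sum_univ_succ]
      ring_nf
    have hsum : Summable (fun n : Fin (k+1) → ℤ => (t + ∑ i, ((n i : ℝ)) ^ 2) ^ (-α)) := by
      rw [show (fun n : Fin (k+1) → ℤ => (t + ∑ i, ((n i : ℝ)) ^ 2) ^ (-α)) = F ∘ e
        from funext hcomp]
      exact hFsum.comp_injective e.injective
    have htsum_eq : (∑' n : Fin (k+1) → ℤ, (t + ∑ i, ((n i : ℝ)) ^ 2) ^ (-α)) =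
        ∑' m : ℤ, ∑' v : Fin k → ℤ, F (m, v) := by
      rw [tsum_congr hcomp, e.tsum_eq F, Summable.tsum_prod' hFsum hinner]
    have hexp : t ^ ((1:ℝ)/2 - β) = t ^ (-(α - (((k+1):ℕ):ℝ)/2)) := by
      congr 1
      push_cast
      simp only [hβdef]; ring
    refine ⟨hsum, ?_, ?_⟩
    · rw [htsum_eq]
      calc a₁ * b₁ * t ^ (-(α - (((k+1):ℕ):ℝ)/2)) = a₁ * (b₁ * t ^ ((1:ℝ)/2 - β)) := by
            rw [hexp]; ring
        _ ≤ a₁ * ∑' m : ℤ, (t + (m:ℝ) ^ 2) ^ (-β) :=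
            mul_le_mul_of_nonneg_left (hB t ht).2.1 ha₁.le
        _ = ∑' m : ℤ, a₁ * (t + (m:ℝ) ^ 2) ^ (-β) := by rw [tsum_mul_left]
        _ ≤ ∑' m : ℤ, ∑' v : Fin k → ℤ, F (m, v) :=
            Summable.tsum_le_tsum hinner_lb (hBsum.mul_left a₁) houter
    · rw [htsum_eq]
      calc (∑' m : ℤ, ∑' v : Fin k → ℤ, F (m, v))
          ≤ ∑' m : ℤ, a₂ * (t + (m:ℝ) ^ 2) ^ (-β) :=
            Summable.tsum_le_tsum hinner_ub houter (hBsum.mul_left a₂)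
        _ = a₂ * ∑' m : ℤ, (t + (m:ℝ) ^ 2) ^ (-β) := tsum_mul_left
        _ ≤ a₂ * (b₂ * t ^ ((1:ℝ)/2 - β)) :=
            mul_le_mul_of_nonneg_left (hB t ht).2.2 ha₂.le
        _ = a₂ * b₂ * t ^ (-(α - (((k+1):ℕ):ℝ)/2)) := by
            rw [hexp]; ring


/-- Σ_{n''∈ℤ^{d''}} (|n'|²+|n''|²+1)^{-α} ≍ (|n'|²+1)^{-(α−d''/2)}. -/
theorem stmt18 (d' d'' : ℕ) (hd' : 1 ≤ d') (hd'' : 1 ≤ d'') (α : ℝ)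
    (hα : (d'' : ℝ) / 2 < α) :
    ∃ c₁ c₂ : ℝ, 0 < c₁ ∧ 0 < c₂ ∧ ∀ n' : Fin d' → ℤ,
      c₁ * (((∑ i, ((n' i : ℝ)) ^ 2) + 1) ^ (-(α - (d'' : ℝ) / 2))) ≤
        (∑' n'' : Fin d'' → ℤ,
          ((∑ i, ((n' i : ℝ)) ^ 2) + (∑ i, ((n'' i : ℝ)) ^ 2) + 1) ^ (-α)) ∧
      (∑' n'' : Fin d'' → ℤ,
          ((∑ i, ((n' i : ℝ)) ^ 2) + (∑ i, ((n'' i : ℝ)) ^ 2) + 1) ^ (-α)) ≤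
        c₂ * (((∑ i, ((n' i : ℝ)) ^ 2) + 1) ^ (-(α - (d'' : ℝ) / 2))) := by
  obtain ⟨c₁, c₂, hc₁, hc₂, hmain⟩ := myKey d'' α hα
  refine ⟨c₁, c₂, hc₁, hc₂, fun n' => ?_⟩
  set t : ℝ := (∑ i, ((n' i : ℝ)) ^ 2) + 1 with htdef
  have ht : 1 ≤ t := le_add_of_nonneg_left (by positivity)
  obtain ⟨-, hlb, hub⟩ := hmain t ht
  have heq : (∑' n'' : Fin d'' → ℤ,
      ((∑ i, ((n' i : ℝ)) ^ 2) + (∑ i, ((n'' i : ℝ)) ^ 2) + 1) ^ (-α)) =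
      ∑' n'' : Fin d'' → ℤ, (t + ∑ i, ((n'' i : ℝ)) ^ 2) ^ (-α) := by
    apply tsum_congr
    intro n''
    congr 1
    rw [htdef]; ring
  rw [heq]
  exact ⟨hlb, hub⟩
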